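/- Under the penalization assumptions, for all x ∈ ℝ³ and t ∈ ℝ one has (1/(4κ)) V(x) t² + (1/4) g(x,t) t − G(x,t) ≥ 0, where g(x,t) = χ_Λ(x) f(t) + (1 − χ_Λ(x)) f_*(t) and G(x,t) = ∫₀ᵗ g(x,s) ds. -/

import Mathlib

/-!
Write `c = V₀/κ`. Since `μ > 4`, the Ambrosetti–Rabinowitz condition gives `4F(t) ≤ f(t) t` for
all `t`. For the truncation `f_*`, which equals `c t` beyond `a`, the same bound at `a` gives
`F(a) ≤ c a²/4`, hence `4 ∫₀ᵗ f_* ≤ 2ct² - ca² ≤ f_*(t) t + c t²` for `t > a`. So in both regions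
`4G(x,t) ≤ g(x,t) t + c t²`, and `c ≤ V(x)/κ` closes the estimate.
-/

open intervalIntegral

noncomputable def linearTruncation (f : ℝ → ℝ) (a c t : ℝ) : ℝ := if t ≤ a then f t else c * t

section Truncation

variable {f : ℝ → ℝ} {a c : ℝ}

lemma four_mul_integral_le_mul_self {μ : ℝ} (hneg : ∀ t ≤ 0, f t = 0) (hμ : 4 ≤ μ)
    (hAR : ∀ t > 0, 0 < μ * ∫ s in 0..t, f s ∧ μ * (∫ s in 0..t, f s) ≤ f t * t) (t : ℝ) :
    4 * ∫ s in 0..t, f s ≤ f t * t := by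
  rcases le_or_gt t 0 with ht | ht
  · have hzero : ∫ s in 0..t, f s = 0 := by
      rw [integral_congr (g := fun _ => 0) fun s hs => hneg s ?_, integral_zero]
      rw [Set.uIcc_of_ge ht] at hs
      exact hs.2
    rw [hzero, hneg t ht]
    norm_num
  · obtain ⟨hpos, hle⟩ := hAR t ht
    nlinarith

lemma linearTruncation_of_le {t : ℝ} (ht : t ≤ a) : linearTruncation f a c t = f t := if_pos ht

lemma linearTruncation_of_ge (hfa : f a = c * a) {t : ℝ} (ht : a ≤ t) :
    linearTruncation f a c t = c * t := by
  rcases ht.eq_or_lt with rfl | ht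
  · exact (linearTruncation_of_le le_rfl).trans hfa
  · exact if_neg ht.not_ge

lemma continuous_linearTruncation (hf : Continuous f) (hfa : f a = c * a) :
    Continuous (linearTruncation f a c) :=
  hf.if_le (continuous_const.mul continuous_id) continuous_id continuous_const
    fun t ht => by rw [ht, hfa]

lemma integral_linearTruncation_of_le (ha : 0 ≤ a) {t : ℝ} (ht : t ≤ a) :
    ∫ s in 0..t, linearTruncation f a c s = ∫ s in 0..t, f s :=
  integral_congr fun _ hs =>
    linearTruncation_of_le <| (Set.mem_uIcc.1 hs).elim (·.2.trans ht) (·.2.trans ha)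

lemma integral_linearTruncation_of_lt (hf : Continuous f) (ha : 0 ≤ a) (hfa : f a = c * a)
    {t : ℝ} (ht : a < t) :
    ∫ s in 0..t, linearTruncation f a c s = (∫ s in 0..a, f s) + c * (t ^ 2 - a ^ 2) / 2 := by
  have hcont := continuous_linearTruncation hf hfa
  have htail : ∫ s in a..t, linearTruncation f a c s = ∫ s in a..t, c * s :=
    integral_congr fun s hs => linearTruncation_of_ge hfa (Set.uIcc_of_le ht.le ▸ hs).1
  rw [← integral_add_adjacent_intervals (hcont.intervalIntegrable 0 a)
    (hcont.intervalIntegrable a t), integral_linearTruncation_of_le ha le_rfl, htail,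
    integral_const_mul, integral_id]
  ring

lemma four_mul_integral_linearTruncation_le {μ : ℝ} (hf : Continuous f)
    (hneg : ∀ t ≤ 0, f t = 0) (hμ : 4 ≤ μ)
    (hAR : ∀ t > 0, 0 < μ * ∫ s in 0..t, f s ∧ μ * (∫ s in 0..t, f s) ≤ f t * t)
    (ha : 0 ≤ a) (hfa : f a = c * a) (hc : 0 ≤ c) (t : ℝ) :
    4 * ∫ s in 0..t, linearTruncation f a c s ≤ linearTruncation f a c t * t + c * t ^ 2 := by
  have hAR' := four_mul_integral_le_mul_self hneg hμ hAR
  rcases le_or_gt t a with ht | ht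
  · rw [integral_linearTruncation_of_le ha ht, linearTruncation_of_le ht]
    nlinarith [hAR' t]
  · rw [integral_linearTruncation_of_lt hf ha hfa ht, linearTruncation_of_ge hfa ht.le]
    nlinarith [hAR' a]

end Truncation

open Classical in

theorem stmt_8_general (f : ℝ → ℝ) (hf : Continuous f)
    (hneg : ∀ t ≤ (0 : ℝ), f t = 0)
    (F : ℝ → ℝ) (hF : ∀ t : ℝ, F t = ∫ τ in (0 : ℝ)..t, f τ)
    (μ : ℝ) (hμ : 4 < μ)
    (hAR : ∀ t > (0 : ℝ), 0 < μ * F t ∧ μ * F t ≤ f t * t)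
    (V₀ κ a : ℝ) (hV₀ : 0 < V₀) (hκ : 1 < κ) (ha : 0 < a)
    (haeq : f a / a = V₀ / κ)
    (fstar : ℝ → ℝ)
    (hfstar : ∀ t : ℝ, fstar t = if t ≤ a then f t else (V₀ / κ) * t)
    (Λ : Set (EuclideanSpace ℝ (Fin 3)))
    (V : EuclideanSpace ℝ (Fin 3) → ℝ) (hV : ∀ x, V₀ ≤ V x)
    (g : EuclideanSpace ℝ (Fin 3) → ℝ → ℝ)
    (hg : ∀ x t, g x t = if x ∈ Λ then f t else fstar t)
    (G : EuclideanSpace ℝ (Fin 3) → ℝ → ℝ)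
    (hG : ∀ x t, G x t = ∫ s in (0 : ℝ)..t, g x s) :
    ∀ (x : EuclideanSpace ℝ (Fin 3)) (t : ℝ),
      (1 / (4 * κ)) * V x * t ^ 2 + (1 / 4) * g x t * t - G x t ≥ 0 := by
  intro x t
  obtain rfl : F = fun t => ∫ τ in (0 : ℝ)..t, f τ := funext hF
  obtain rfl : fstar = linearTruncation f a (V₀ / κ) := funext hfstar
  have hκ₀ : 0 < κ := by linarith
  have hc : 0 < V₀ / κ := div_pos hV₀ hκ₀
  have hfa : f a = V₀ / κ * a := (div_eq_iff ha.ne').1 haeq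
  have hG_le : 4 * G x t ≤ g x t * t + V₀ / κ * t ^ 2 := by
    simp only [hG, hg]
    by_cases hx : x ∈ Λ
    · simp only [hx, if_true]
      nlinarith [four_mul_integral_le_mul_self hneg hμ.le hAR t]
    · simp only [hx, if_false]
      exact four_mul_integral_linearTruncation_le hf hneg hμ.le hAR ha.le hfa hc.le t
  have hV_le : V₀ / κ * t ^ 2 ≤ V x / κ * t ^ 2 := by gcongr; exact hV x
  have hsplit : 1 / (4 * κ) * V x * t ^ 2 = V x / κ * t ^ 2 / 4 := by ring
  rw [hsplit]
  linarith

open Classical in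
theorem stmt_8 (f : ℝ → ℝ) (hf : Continuous f)
    (hneg : ∀ t ≤ (0 : ℝ), f t = 0)
    (F : ℝ → ℝ) (hF : ∀ t : ℝ, F t = ∫ τ in (0 : ℝ)..t, f τ)
    (μ : ℝ) (hμ : 4 < μ)
    (hAR : ∀ t > (0 : ℝ), 0 < μ * F t ∧ μ * F t ≤ f t * t)
    (hmono : StrictMonoOn (fun t : ℝ => f t / t ^ 3) (Set.Ioi 0))
    (V₀ κ a : ℝ) (hV₀ : 0 < V₀) (hκ : 1 < κ) (ha : 0 < a)
    (haeq : f a / a = V₀ / κ)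
    (fstar : ℝ → ℝ)
    (hfstar : ∀ t : ℝ, fstar t = if t ≤ a then f t else (V₀ / κ) * t)
    (Λ : Set (EuclideanSpace ℝ (Fin 3))) (hΛo : IsOpen Λ) (hΛb : Bornology.IsBounded Λ)
    (V : EuclideanSpace ℝ (Fin 3) → ℝ) (hVcont : Continuous V) (hV : ∀ x, V₀ ≤ V x)
    (g : EuclideanSpace ℝ (Fin 3) → ℝ → ℝ)
    (hg : ∀ x t, g x t = if x ∈ Λ then f t else fstar t)
    (G : EuclideanSpace ℝ (Fin 3) → ℝ → ℝ)
    (hG : ∀ x t, G x t = ∫ s in (0 : ℝ)..t, g x s) :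
    ∀ (x : EuclideanSpace ℝ (Fin 3)) (t : ℝ),
      (1 / (4 * κ)) * V x * t ^ 2 + (1 / 4) * g x t * t - G x t ≥ 0 :=
  stmt_8_general f hf hneg F hF μ hμ hAR V₀ κ a hV₀ hκ ha haeq fstar hfstar Λ V hV g hg G hG
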